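/- arXiv:2510.00850 — 3 statements merged into one kernel-verified Lean document; each statement's English description precedes it below -/
import Mathlib

section
/- Let ŵ ∈ W and suppose δ ∈ Δ satisfies J(ŵ,δ) ≤ J(ŵ,δ'') for every δ'' ∈ Δ (i.e., δ is an optimal solution of minimizing J(ŵ,·) over Δ). Then there exists (α,β,γ) ∈ D such that: (i) G(ŵ,(α,β,γ)) ≤ G(ŵ,(α',β',γ')) for every (α',β',γ') ∈ D (i.e., (α,β,γ) is an optimal solution of minimizing G(ŵ,·) over D); (ii) J(w,δ) = G(w,(α,β,γ)) for all w ∈ W; and (iii) if δ is a Pareto cut in Δ, then (α,β,γ) is a Pareto cut in D. -/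
open Finset

/-- The maximum revenue `r̄` among the positions `1, …, L+1`. -/
noncomputable def rbar (L : ℕ) (ρ : ℕ → ℝ) : ℝ :=
  (Finset.Icc 1 (L + 1)).sup' (Finset.nonempty_Icc.mpr (by omega)) ρ

/-- Membership in `Δ = {δ ∈ ℝ^{L+1} : 0 ≤ δ 1 ≤ ⋯ ≤ δ (L+1) ≤ r̄}`. -/
def memDelta (L : ℕ) (ρ δ : ℕ → ℝ) : Prop :=
  0 ≤ δ 1 ∧ (∀ ℓ, 1 ≤ ℓ → ℓ ≤ L → δ ℓ ≤ δ (ℓ + 1)) ∧ δ (L + 1) ≤ rbar L ρ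

/-- Membership in `W = {w ∈ ℝ^{N+1} : 0 ≤ w ℓ ≤ 1 for all ℓ, w (L+1) = 1}`. -/
def memW (N L : ℕ) (w : ℕ → ℝ) : Prop :=
  (∀ ℓ, 1 ≤ ℓ → ℓ ≤ N + 1 → 0 ≤ w ℓ ∧ w ℓ ≤ 1) ∧ w (L + 1) = 1

/-- The objective `J(w, δ)`. -/
noncomputable def Jfun (L : ℕ) (ρ w δ : ℕ → ℝ) : ℝ :=
  δ (L + 1) + ∑ ℓ ∈ Finset.Icc 1 L, (max 0 (ρ ℓ - δ ℓ) - (δ (ℓ + 1) - δ ℓ)) * w ℓ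

/-- Membership in the dual feasible set `D`. -/
def memD (N : ℕ) (ρ α β : ℕ → ℝ) (γ : ℝ) : Prop :=
  (∀ ℓ, 1 ≤ ℓ → ℓ ≤ N + 1 → 0 ≤ α ℓ ∧ 0 ≤ β ℓ) ∧
  (∀ ℓ, 1 ≤ ℓ → ℓ ≤ N + 1 → ρ ℓ ≤ γ + α ℓ - ∑ ℓ' ∈ Finset.Icc ℓ (N + 1), β ℓ')

/-- The objective `G(w, (α, β, γ))`. -/
noncomputable def Gfun (N : ℕ) (w α β : ℕ → ℝ) (γ : ℝ) : ℝ :=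
  γ + ∑ ℓ ∈ Finset.Icc 1 (N + 1), (α ℓ - β ℓ) * w ℓ

/-- `δ'` dominates `δ` (both thought of as elements of `Δ`). -/
def dominatesDelta (N L : ℕ) (ρ δ' δ : ℕ → ℝ) : Prop :=
  (∀ w, memW N L w → Jfun L ρ w δ' ≤ Jfun L ρ w δ) ∧
  ∃ w, memW N L w ∧ Jfun L ρ w δ' < Jfun L ρ w δ

/-- `δ` is a Pareto cut in `Δ`. -/
def paretoDelta (N L : ℕ) (ρ δ : ℕ → ℝ) : Prop :=
  ¬ ∃ δ', memDelta L ρ δ' ∧ dominatesDelta N L ρ δ' δ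

/-- `(α', β', γ')` dominates `(α, β, γ)` (both thought of as elements of `D`). -/
def dominatesD (N L : ℕ) (α' β' : ℕ → ℝ) (γ' : ℝ) (α β : ℕ → ℝ) (γ : ℝ) : Prop :=
  (∀ w, memW N L w → Gfun N w α' β' γ' ≤ Gfun N w α β γ) ∧
  ∃ w, memW N L w ∧ Gfun N w α' β' γ' < Gfun N w α β γ

/-- `(α, β, γ)` is a Pareto cut in `D`. -/
def paretoD (N L : ℕ) (ρ α β : ℕ → ℝ) (γ : ℝ) : Prop :=
  ¬ ∃ α' β' γ', memD N ρ α' β' γ' ∧ dominatesD N L α' β' γ' α β γ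


/-!
Write `s ℓ = γ - ∑_{ℓ' ≥ ℓ} β ℓ'`. In these levels, `(α, β, γ) ∈ D` says that `s` is
nondecreasing with `β ℓ = s (ℓ + 1) - s ℓ`, `s (N + 2) = γ`, and `ρ ℓ ≤ α ℓ + s ℓ`. Any `δ ∈ Δ`,
extended beyond the no-purchase position by a large constant, is such a level vector; with
`α ℓ = max 0 (ρ ℓ - δ ℓ)` the resulting dual point has `G(·, (α, β, γ)) = J(·, δ)` on `W`.
Conversely, clipping the levels of any dual point into `[0, r̄]` gives a `δ'' ∈ Δ` with
`J(w, δ'') ≤ G(w, ·)` on `W`: clipping at `0` costs at most `max 0 (-s (L + 1))`, which the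
constraint at the no-purchase position pays for, and clipping at `r̄ ≥ ρ` only lowers `J` since
`w ≤ 1`. These two maps carry optimality for `ŵ` and Pareto optimality from `Δ` to `D`.
-/
lemma sum_Icc_sub_telescope (f : ℕ → ℝ) {a b : ℕ} (h : a ≤ b + 1) :
    ∑ ℓ ∈ Icc a b, (f (ℓ + 1) - f ℓ) = f (b + 1) - f a := by
  rw [← Finset.Ico_add_one_right_eq_Icc, Finset.sum_Ico_sub _ h]

lemma sum_Icc_one_eq_add (f : ℕ → ℝ) {L N : ℕ} (h : L ≤ N) :
    ∑ ℓ ∈ Icc 1 (N + 1), f ℓ = ∑ ℓ ∈ Icc 1 L, f ℓ + ∑ ℓ ∈ Icc (L + 1) (N + 1), f ℓ := by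
  simp only [Icc_add_one_left_eq_Ioc, show Icc 1 = Ioc 0 from funext (Icc_add_one_left_eq_Ioc 0)]
  exact (sum_Ioc_consecutive f L.zero_le (by omega)).symm

lemma memDelta.nonneg {L : ℕ} {ρ δ : ℕ → ℝ} (hδ : memDelta L ρ δ) :
    ∀ ℓ ∈ Icc 1 (L + 1), 0 ≤ δ ℓ := by
  intro ℓ hℓ
  rw [mem_Icc] at hℓ
  induction ℓ, hℓ.1 using Nat.le_induction with
  | base => exact hδ.1
  | succ n hn ih => exact (ih ⟨hn, by omega⟩).trans (hδ.2.1 n hn (by omega))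

lemma max_zero_sub_min_eq {ρ c a : ℝ} (hρ : ρ ≤ c) : max 0 (ρ - min c a) = max 0 (ρ - a) := by
  rcases le_total a c with h | h
  · rw [min_eq_right h]
  · rw [min_eq_left h, max_eq_left (by linarith), max_eq_left (by linarith)]

lemma sub_min_le_sub_min {c a b : ℝ} (hab : a ≤ b) : a - min c a ≤ b - min c b := by
  simp only [min_def]; split_ifs <;> linarith

lemma Jfun_min_le {L : ℕ} {ρ w t : ℕ → ℝ} {c : ℝ} (hρ : ∀ ℓ ∈ Icc 1 L, ρ ℓ ≤ c)
    (ht : ∀ ℓ ∈ Icc 1 L, t ℓ ≤ t (ℓ + 1)) (hw : ∀ ℓ ∈ Icc 1 L, w ℓ ≤ 1) :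
    Jfun L ρ w (fun ℓ => min c (t ℓ)) ≤ Jfun L ρ w t := by
  set d : ℕ → ℝ := fun ℓ => t ℓ - min c (t ℓ) with hd
  have hterm : ∀ ℓ ∈ Icc 1 L,
      (max 0 (ρ ℓ - min c (t ℓ)) - (min c (t (ℓ + 1)) - min c (t ℓ))) * w ℓ ≤
        (max 0 (ρ ℓ - t ℓ) - (t (ℓ + 1) - t ℓ)) * w ℓ + (d (ℓ + 1) - d ℓ) := by
    intro ℓ hℓ
    have hd_mono : 0 ≤ d (ℓ + 1) - d ℓ := sub_nonneg.2 (sub_min_le_sub_min (ht ℓ hℓ))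
    rw [max_zero_sub_min_eq (hρ ℓ hℓ)]
    nlinarith [hw ℓ hℓ]
  have hsum := sum_le_sum hterm
  rw [sum_add_distrib, sum_Icc_sub_telescope d (by omega)] at hsum
  have hd1 : 0 ≤ d 1 := sub_nonneg.2 (min_le_right _ _)
  simp only [Jfun, hd] at hsum hd1 ⊢
  linarith

lemma max_zero_sub_max_zero_le {ρ a b : ℝ} (hρ : 0 ≤ ρ) :
    max 0 (ρ - max 0 a) - (max 0 b - max 0 a) ≤ max 0 (ρ - a) - (b - a) := by
  simp only [max_def]; split_ifs <;> linarith

lemma Jfun_max_zero_le {L : ℕ} {ρ w s : ℕ → ℝ} (hρ : ∀ ℓ ∈ Icc 1 L, 0 ≤ ρ ℓ)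
    (hw : ∀ ℓ ∈ Icc 1 L, 0 ≤ w ℓ) :
    Jfun L ρ w (fun ℓ => max 0 (s ℓ)) ≤ Jfun L ρ w s + max 0 (-s (L + 1)) := by
  have hsum := sum_le_sum fun ℓ hℓ =>
    mul_le_mul_of_nonneg_right (max_zero_sub_max_zero_le (a := s ℓ) (b := s (ℓ + 1)) (hρ ℓ hℓ))
      (hw ℓ hℓ)
  have htop : max 0 (s (L + 1)) = s (L + 1) + max 0 (-s (L + 1)) := by
    simp only [max_def]; split_ifs <;> linarith
  simp only [Jfun]
  linarith

def dualLevel (N : ℕ) (β : ℕ → ℝ) (γ : ℝ) (ℓ : ℕ) : ℝ :=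
  γ - ∑ ℓ' ∈ Icc ℓ (N + 1), β ℓ'

lemma dualLevel_succ {N ℓ : ℕ} (β : ℕ → ℝ) (γ : ℝ) (hℓ : ℓ ≤ N + 1) :
    dualLevel N β γ (ℓ + 1) = dualLevel N β γ ℓ + β ℓ := by
  rw [dualLevel, dualLevel, ← insert_Icc_add_one_left_eq_Icc hℓ, sum_insert (by simp)]
  ring

lemma Jfun_add_le_Gfun {N L : ℕ} (hLN : L ≤ N) {ρ α β w : ℕ → ℝ} {γ : ℝ}
    (hρ0 : ρ (L + 1) = 0) (hD : memD N ρ α β γ) (hw : memW N L w) :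
    Jfun L ρ w (dualLevel N β γ) + max 0 (-dualLevel N β γ (L + 1)) ≤ Gfun N w α β γ := by
  obtain ⟨hαβ, hρ⟩ := hD
  have hlevel : ∀ ℓ, 1 ≤ ℓ → ℓ ≤ N + 1 → ρ ℓ ≤ α ℓ + dualLevel N β γ ℓ := fun ℓ h1 h2 => by
    rw [dualLevel]; linarith [hρ ℓ h1 h2]
  have hstep : ∀ ℓ ≤ N + 1, β ℓ = dualLevel N β γ (ℓ + 1) - dualLevel N β γ ℓ := fun ℓ hℓ => by
    rw [dualLevel_succ β γ hℓ]; ring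
  have htail_sum : ∑ ℓ ∈ Icc (L + 1) (N + 1), β ℓ = γ - dualLevel N β γ (L + 1) := by
    rw [dualLevel]; ring
  rw [Gfun, sum_Icc_one_eq_add _ hLN, Jfun]
  clear hρ
  generalize dualLevel N β γ = s at *
  have hhead : ∀ ℓ ∈ Icc 1 L,
      (max 0 (ρ ℓ - s ℓ) - (s (ℓ + 1) - s ℓ)) * w ℓ ≤ (α ℓ - β ℓ) * w ℓ := by
    intro ℓ hℓ
    rw [mem_Icc] at hℓ
    have hα : max 0 (ρ ℓ - s ℓ) ≤ α ℓ :=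
      max_le (hαβ ℓ hℓ.1 (by omega)).1 (by linarith [hlevel ℓ hℓ.1 (by omega)])
    rw [hstep ℓ (by omega)]
    exact mul_le_mul_of_nonneg_right (by linarith) (hw.1 ℓ hℓ.1 (by omega)).1
  have htail : ∀ ℓ ∈ Icc (L + 1) (N + 1),
      (if ℓ = L + 1 then α ℓ else 0) - β ℓ ≤ (α ℓ - β ℓ) * w ℓ := by
    intro ℓ hℓ
    rw [mem_Icc] at hℓ
    obtain ⟨hα, hβ⟩ := hαβ ℓ (by omega) hℓ.2
    obtain ⟨hw0, hw1⟩ := hw.1 ℓ (by omega) hℓ.2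
    split_ifs with h
    · rw [h, hw.2, mul_one]
    · nlinarith
  have htop : max 0 (-s (L + 1)) ≤ α (L + 1) :=
    max_le (hαβ (L + 1) (by omega) (by omega)).1
      (by linarith [hlevel (L + 1) (by omega) (by omega)])
  have h1 := sum_le_sum hhead
  have h2 := sum_le_sum htail
  rw [sum_sub_distrib, sum_ite_eq', if_pos (by simp [hLN])] at h2
  linarith

lemma le_rbar {L ℓ : ℕ} (ρ : ℕ → ℝ) (hℓ : ℓ ∈ Icc 1 (L + 1)) : ρ ℓ ≤ rbar L ρ :=
  le_sup' ρ hℓ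

lemma exists_memDelta_Jfun_le_Gfun {N L : ℕ} (hLN : L ≤ N) {ρ α β : ℕ → ℝ} {γ : ℝ}
    (hρ : ∀ ℓ ∈ Icc 1 L, 0 ≤ ρ ℓ) (hρ0 : ρ (L + 1) = 0) (hD : memD N ρ α β γ) :
    ∃ δ, memDelta L ρ δ ∧ ∀ w, memW N L w → Jfun L ρ w δ ≤ Gfun N w α β γ := by
  have hs : ∀ ℓ ∈ Icc 1 L, max 0 (dualLevel N β γ ℓ) ≤ max 0 (dualLevel N β γ (ℓ + 1)) := by
    intro ℓ hℓ
    rw [mem_Icc] at hℓ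
    refine max_le_max le_rfl ?_
    rw [dualLevel_succ β γ (by omega)]
    linarith [(hD.1 ℓ hℓ.1 (by omega)).2]
  have hrbar : 0 ≤ rbar L ρ := hρ0 ▸ le_rbar ρ (by simp)
  refine ⟨fun ℓ => min (rbar L ρ) (max 0 (dualLevel N β γ ℓ)),
    ⟨le_min hrbar (le_max_left _ _), fun ℓ h1 h2 => min_le_min le_rfl (hs ℓ (mem_Icc.2 ⟨h1, h2⟩)),
      min_le_left _ _⟩, fun w hw => ?_⟩
  calc Jfun L ρ w (fun ℓ => min (rbar L ρ) (max 0 (dualLevel N β γ ℓ)))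
      ≤ Jfun L ρ w (fun ℓ => max 0 (dualLevel N β γ ℓ)) :=
        Jfun_min_le (fun ℓ hℓ => le_rbar ρ (by simp at hℓ ⊢; omega)) hs
          (fun ℓ hℓ => (hw.1 ℓ (mem_Icc.1 hℓ).1 (by simp at hℓ; omega)).2)
    _ ≤ Jfun L ρ w (dualLevel N β γ) + max 0 (-dualLevel N β γ (L + 1)) :=
        Jfun_max_zero_le hρ (fun ℓ hℓ => (hw.1 ℓ (mem_Icc.1 hℓ).1 (by simp at hℓ; omega)).1)
    _ ≤ Gfun N w α β γ := Jfun_add_le_Gfun hLN hρ0 hD hw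

lemma memD_of_level {N : ℕ} {ρ α σ : ℕ → ℝ} (hα : ∀ ℓ ∈ Icc 1 (N + 1), 0 ≤ α ℓ)
    (hσ : ∀ ℓ ∈ Icc 1 (N + 1), σ ℓ ≤ σ (ℓ + 1))
    (hρ : ∀ ℓ ∈ Icc 1 (N + 1), ρ ℓ ≤ α ℓ + σ ℓ) :
    memD N ρ α (fun ℓ => σ (ℓ + 1) - σ ℓ) (σ (N + 2)) := by
  refine ⟨fun ℓ h1 h2 => ⟨hα ℓ (mem_Icc.2 ⟨h1, h2⟩), sub_nonneg.2 (hσ ℓ (mem_Icc.2 ⟨h1, h2⟩))⟩,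
    fun ℓ h1 h2 => ?_⟩
  rw [sum_Icc_sub_telescope σ (by omega)]
  linarith [hρ ℓ (mem_Icc.2 ⟨h1, h2⟩)]

lemma exists_memD_Jfun_eq_Gfun {N L : ℕ} (hLN : L ≤ N) {ρ δ : ℕ → ℝ} (hρ0 : ρ (L + 1) = 0)
    (hδ : memDelta L ρ δ) :
    ∃ α β γ, memD N ρ α β γ ∧ ∀ w, memW N L w → Jfun L ρ w δ = Gfun N w α β γ := by
  -- any `K ≥ 0` bounding the revenues `ρ ℓ` with `ℓ > L + 1` would do
  set K := ∑ ℓ ∈ Icc 1 (N + 1), max 0 (ρ ℓ)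
  have hK : ∀ ℓ ∈ Icc 1 (N + 1), max 0 (ρ ℓ) ≤ K :=
    fun ℓ hℓ => single_le_sum (fun i _ => le_max_left 0 (ρ i)) hℓ
  have hK0 : 0 ≤ K := sum_nonneg fun i _ => le_max_left 0 (ρ i)
  have hδtop : 0 ≤ δ (L + 1) := hδ.nonneg (L + 1) (by simp)
  set σ : ℕ → ℝ := fun ℓ => if ℓ ≤ L + 1 then δ ℓ else δ (L + 1) + K with hσ
  set α : ℕ → ℝ := fun ℓ => if ℓ ≤ L then max 0 (ρ ℓ - δ ℓ) else 0 with hα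
  have hσN : σ (N + 2) = δ (L + 1) + K := if_neg (by omega)
  refine ⟨α, fun ℓ => σ (ℓ + 1) - σ ℓ, σ (N + 2), memD_of_level ?_ ?_ ?_, fun w hw => ?_⟩
  · intro ℓ _
    simp only [hα]
    split_ifs <;> simp
  · intro ℓ hℓ
    rw [mem_Icc] at hℓ
    simp only [hσ]
    split_ifs with h1 h2 h2
    · exact hδ.2.1 ℓ hℓ.1 (by omega)
    · rw [show ℓ = L + 1 by omega]; linarith
    · omega
    · rfl
  · intro ℓ hℓ
    simp only [hα, hσ]
    split_ifs with h1 h2 h2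
    · linarith [le_max_right 0 (ρ ℓ - δ ℓ)]
    · omega
    · rw [show ℓ = L + 1 by omega, hρ0]; linarith
    · linarith [le_max_right 0 (ρ ℓ), hK ℓ hℓ]
  have hhead : ∀ ℓ ∈ Icc 1 L, (α ℓ - (σ (ℓ + 1) - σ ℓ)) * w ℓ =
      (max 0 (ρ ℓ - δ ℓ) - (δ (ℓ + 1) - δ ℓ)) * w ℓ := by
    intro ℓ hℓ
    rw [mem_Icc] at hℓ
    simp only [hα, hσ, if_pos hℓ.2, if_pos (by omega : ℓ ≤ L + 1),
      if_pos (by omega : ℓ + 1 ≤ L + 1)]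
  have htail : ∀ ℓ ∈ Icc (L + 1) (N + 1), (α ℓ - (σ (ℓ + 1) - σ ℓ)) * w ℓ =
      if ℓ = L + 1 then -K else 0 := by
    intro ℓ hℓ
    rw [mem_Icc] at hℓ
    simp only [hα, hσ, if_neg (by omega : ¬ ℓ ≤ L), if_neg (by omega : ¬ ℓ + 1 ≤ L + 1)]
    split_ifs with h1 h2 h2
    · rw [h2, hw.2]; ring
    · omega
    · omega
    · ring
  rw [Gfun, sum_Icc_one_eq_add _ hLN, sum_congr rfl hhead, sum_congr rfl htail, sum_ite_eq',
    if_pos (by simp [hLN]), hσN, Jfun]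
  ring

theorem stmt5_general
    (N L : ℕ) (hLN : L ≤ N)
    (ρ : ℕ → ℝ)
    (hρpos : ∀ ℓ, 1 ≤ ℓ → ℓ ≤ N + 1 → ℓ ≠ L + 1 → 0 < ρ ℓ)
    (hρ0 : ρ (L + 1) = 0)
    (w₀ : ℕ → ℝ) (hw₀ : memW N L w₀)
    (δ : ℕ → ℝ) (hδ : memDelta L ρ δ)
    (hopt : ∀ δ'', memDelta L ρ δ'' → Jfun L ρ w₀ δ ≤ Jfun L ρ w₀ δ'') :
    ∃ α β γ, memD N ρ α β γ ∧
      (∀ α' β' γ', memD N ρ α' β' γ' → Gfun N w₀ α β γ ≤ Gfun N w₀ α' β' γ') ∧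
      (∀ w, memW N L w → Jfun L ρ w δ = Gfun N w α β γ) ∧
      (paretoDelta N L ρ δ → paretoD N L ρ α β γ) := by
  have hρ : ∀ ℓ ∈ Icc 1 L, 0 ≤ ρ ℓ := fun ℓ hℓ => by
    rw [mem_Icc] at hℓ
    exact (hρpos ℓ hℓ.1 (by omega) (by omega)).le
  obtain ⟨α, β, γ, hD, hJG⟩ := exists_memD_Jfun_eq_Gfun hLN hρ0 hδ
  refine ⟨α, β, γ, hD, fun α' β' γ' hD' => ?_, hJG, ?_⟩
  · obtain ⟨δ', hδ', hJ⟩ := exists_memDelta_Jfun_le_Gfun hLN hρ hρ0 hD'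
    calc Gfun N w₀ α β γ = Jfun L ρ w₀ δ := (hJG w₀ hw₀).symm
      _ ≤ Jfun L ρ w₀ δ' := hopt δ' hδ'
      _ ≤ Gfun N w₀ α' β' γ' := hJ w₀ hw₀
  · rintro hP ⟨α', β', γ', hD', hle, w₁, hw₁, hlt⟩
    obtain ⟨δ', hδ', hJ⟩ := exists_memDelta_Jfun_le_Gfun hLN hρ hρ0 hD'
    exact hP ⟨δ', hδ', fun w hw => (hJ w hw).trans ((hle w hw).trans (hJG w hw).ge), w₁, hw₁,
      (hJ w₁ hw₁).trans_lt (hlt.trans_eq (hJG w₁ hw₁).symm)⟩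

theorem stmt5
    (N L : ℕ) (hL1 : 1 ≤ L) (hLN : L ≤ N)
    (ρ : ℕ → ℝ)
    (hρpos : ∀ ℓ, 1 ≤ ℓ → ℓ ≤ N + 1 → ℓ ≠ L + 1 → 0 < ρ ℓ)
    (hρ0 : ρ (L + 1) = 0)
    (w₀ : ℕ → ℝ) (hw₀ : memW N L w₀)
    (δ : ℕ → ℝ) (hδ : memDelta L ρ δ)
    (hopt : ∀ δ'', memDelta L ρ δ'' → Jfun L ρ w₀ δ ≤ Jfun L ρ w₀ δ'') :
    ∃ α β γ, memD N ρ α β γ ∧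
      (∀ α' β' γ', memD N ρ α' β' γ' → Gfun N w₀ α β γ ≤ Gfun N w₀ α' β' γ') ∧
      (∀ w, memW N L w → Jfun L ρ w δ = Gfun N w α β γ) ∧
      (paretoDelta N L ρ δ → paretoD N L ρ α β γ) :=
  stmt5_general N L hLN ρ hρpos hρ0 w₀ hw₀ δ hδ hopt
end

section
/- Let (α,β,γ) ∈ D and define δ ∈ ℝ^{L+1} by δ(ℓ) := max{min{γ − Σ_{ℓ'=ℓ}^{N+1} β(ℓ'), r̄}, 0} for ℓ ∈ {1,...,L+1}. Then δ ∈ Δ and J(w,δ) ≤ G(w,(α,β,γ)) for all w ∈ W. -/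
open Finset

/-!
Write `c ℓ := γ - ∑_{ℓ' ≥ ℓ} β ℓ'`, nondecreasing because `β ≥ 0`; `δ` is `c` clamped to `[0, r̄]`,
so `c ℓ = δ ℓ + (c ℓ - r̄)⁺ - (-c ℓ)⁺` and `β ℓ = c (ℓ+1) - c ℓ`. Dual feasibility and
`0 ≤ ρ ℓ ≤ r̄` give `(ρ ℓ - δ ℓ)⁺ + (-c ℓ)⁺ ≤ α ℓ`, so the `ℓ`-th term of `J` exceeds the `ℓ`-th
term of `G` by at most `((c (ℓ+1) - r̄)⁺ - (c ℓ - r̄)⁺) w ℓ`; as `w ≤ 1` these excesses telescope to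
at most `(c (L+1) - r̄)⁺`. The terms of `G` beyond `L` contribute at least
`α (L+1) - ∑_{ℓ' ≥ L+1} β ℓ'` because `w (L+1) = 1`, and `(-c (L+1))⁺ ≤ α (L+1)` is dual
feasibility at the no-purchase position, where `ρ = 0`.
-/

section Clamp

variable {r : ℝ}

lemma max_min_eq_sub_add (hr : 0 ≤ r) (x : ℝ) :
    max (min x r) 0 = x - max (x - r) 0 + max (-x) 0 := by
  rcases le_total x 0 with h | h
  · rw [min_eq_left (h.trans hr), max_eq_right h, max_eq_right (by linarith),
      max_eq_left (by linarith)]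
    ring
  · rw [max_eq_right (by linarith : -x ≤ 0)]
    rcases le_total x r with h' | h'
    · rw [min_eq_left h', max_eq_left h, max_eq_right (by linarith)]
      ring
    · rw [min_eq_right h', max_eq_left hr, max_eq_left (by linarith)]
      ring

lemma max_sub_max_min_add_le {p a x : ℝ} (hp : 0 ≤ p) (hpr : p ≤ r) (ha : 0 ≤ a)
    (hpx : p ≤ a + x) : max 0 (p - max (min x r) 0) + max (-x) 0 ≤ a := by
  rcases le_total x 0 with h | h
  · rw [max_eq_right (min_le_left x r |>.trans h), max_eq_left (by linarith : 0 ≤ -x), sub_zero,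
      max_eq_right hp]
    linarith
  · have : p - a ≤ min x r := le_min (by linarith) (by linarith)
    rw [max_eq_right (by linarith : -x ≤ 0), add_zero]
    exact max_le ha (by linarith [le_max_left (min x r) 0])

lemma max_sub_max_min_sub_le {p a x x' : ℝ} (hr : 0 ≤ r) (hp : 0 ≤ p) (hpr : p ≤ r) (ha : 0 ≤ a)
    (hpx : p ≤ a + x) :
    max 0 (p - max (min x r) 0) - (max (min x' r) 0 - max (min x r) 0) ≤
      a - (x' - x) + (max (x' - r) 0 - max (x - r) 0) := by
  have := max_min_eq_sub_add hr x
  have := max_min_eq_sub_add hr x'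
  have := max_sub_max_min_add_le hp hpr ha hpx
  have := le_max_right (-x') 0
  linarith

end Clamp

lemma sum_Ico_sub_mul_le {u w : ℕ → ℝ} {m n : ℕ} (hmn : m ≤ n)
    (hu : ∀ i ∈ Ico m n, u i ≤ u (i + 1)) (hw : ∀ i ∈ Ico m n, w i ≤ 1) :
    ∑ i ∈ Ico m n, (u (i + 1) - u i) * w i ≤ u n - u m :=
  (sum_le_sum fun i hi => mul_le_of_le_one_right (sub_nonneg.2 (hu i hi)) (hw i hi)).trans_eq
    (sum_Ico_sub u hmn)

lemma sub_sum_le_sum_sub_mul {ι : Type*} {s : Finset ι} {a b w : ι → ℝ} {i : ι} (hi : i ∈ s)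
    (hwi : w i = 1) (ha : ∀ j ∈ s, 0 ≤ a j) (hb : ∀ j ∈ s, 0 ≤ b j)
    (hw : ∀ j ∈ s, 0 ≤ w j ∧ w j ≤ 1) :
    a i - ∑ j ∈ s, b j ≤ ∑ j ∈ s, (a j - b j) * w j := by
  have ha' : a i ≤ ∑ j ∈ s, a j * w j := by
    simpa [hwi] using single_le_sum (fun j hj => mul_nonneg (ha j hj) (hw j hj).1) hi
  have hb' : ∑ j ∈ s, b j * w j ≤ ∑ j ∈ s, b j :=
    sum_le_sum fun j hj => mul_le_of_le_one_right (hb j hj) (hw j hj).2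
  simp only [sub_mul, sum_sub_distrib]
  linarith

lemma sum_Icc_consecutive {M : Type*} [AddCommMonoid M] (f : ℕ → M) {m n k : ℕ}
    (hmn : m ≤ n + 1) (hnk : n ≤ k) :
    ∑ i ∈ Icc m n, f i + ∑ i ∈ Icc (n + 1) k, f i = ∑ i ∈ Icc m k, f i := by
  simp only [← Ico_add_one_right_eq_Icc]
  exact sum_Ico_consecutive f hmn (by omega)

def tailSum (N : ℕ) (β : ℕ → ℝ) (ℓ : ℕ) : ℝ :=
  ∑ ℓ' ∈ Icc ℓ (N + 1), β ℓ'

lemma tailSum_eq_add {N ℓ : ℕ} (β : ℕ → ℝ) (h : ℓ ≤ N + 1) :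
    tailSum N β ℓ = β ℓ + tailSum N β (ℓ + 1) := by
  rw [tailSum, tailSum, Icc_add_one_left_eq_Ioc, add_sum_Ioc_eq_sum_Icc h]

lemma tailSum_succ_le {N ℓ : ℕ} {β : ℕ → ℝ} (h : ℓ ≤ N + 1) (hβ : 0 ≤ β ℓ) :
    tailSum N β (ℓ + 1) ≤ tailSum N β ℓ := by
  rw [tailSum_eq_add β h]
  exact le_add_of_nonneg_left hβ

lemma memDelta_of_eq_max_min {L : ℕ} {ρ δ c : ℕ → ℝ} (hr : 0 ≤ rbar L ρ)
    (hc : ∀ ℓ, 1 ≤ ℓ → ℓ ≤ L → c ℓ ≤ c (ℓ + 1))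
    (hδ : ∀ ℓ, 1 ≤ ℓ → ℓ ≤ L + 1 → δ ℓ = max (min (c ℓ) (rbar L ρ)) 0) :
    memDelta L ρ δ := by
  refine ⟨?_, fun ℓ h1 h2 => ?_, ?_⟩
  · rw [hδ 1 le_rfl (by omega)]
    exact le_max_right _ _
  · rw [hδ ℓ h1 (by omega), hδ (ℓ + 1) (by omega) (by omega)]
    exact max_le_max_right 0 (min_le_min_right _ (hc ℓ h1 h2))
  · rw [hδ (L + 1) (by omega) le_rfl]
    exact max_le (min_le_right _ _) hr

lemma Jfun_le_Gfun {N L : ℕ} (hLN : L ≤ N) {ρ α β δ w : ℕ → ℝ} {γ r : ℝ} (hr : 0 ≤ r)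
    (hD : memD N ρ α β γ) (hρ : ∀ ℓ, 1 ≤ ℓ → ℓ ≤ L + 1 → 0 ≤ ρ ℓ ∧ ρ ℓ ≤ r)
    (hδ : ∀ ℓ, 1 ≤ ℓ → ℓ ≤ L + 1 → δ ℓ = max (min (γ - tailSum N β ℓ) r) 0)
    (hw : memW N L w) : Jfun L ρ w δ ≤ Gfun N w α β γ := by
  obtain ⟨hαβ, hdual⟩ := hD
  obtain ⟨hw, hwL⟩ := hw
  set c : ℕ → ℝ := fun ℓ => γ - tailSum N β ℓ
  set u : ℕ → ℝ := fun ℓ => max (c ℓ - r) 0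
  have hdual' : ∀ ℓ, 1 ≤ ℓ → ℓ ≤ N + 1 → ρ ℓ ≤ α ℓ + c ℓ := fun ℓ h1 h2 =>
    (hdual ℓ h1 h2).trans_eq (by simp only [c, tailSum]; ring)
  have hstep : ∀ ℓ ∈ Icc 1 L, (max 0 (ρ ℓ - δ ℓ) - (δ (ℓ + 1) - δ ℓ)) * w ℓ ≤
      (α ℓ - β ℓ) * w ℓ + (u (ℓ + 1) - u ℓ) * w ℓ := by
    intro ℓ hℓ
    obtain ⟨h1, h2⟩ := mem_Icc.1 hℓ
    have hβ : β ℓ = c (ℓ + 1) - c ℓ := by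
      simp only [c, tailSum_eq_add β (by omega : ℓ ≤ N + 1)]
      ring
    rw [← add_mul, hδ ℓ h1 (by omega), hδ (ℓ + 1) (by omega) (by omega), hβ]
    exact mul_le_mul_of_nonneg_right (max_sub_max_min_sub_le hr (hρ ℓ h1 (by omega)).1
      (hρ ℓ h1 (by omega)).2 (hαβ ℓ h1 (by omega)).1 (hdual' ℓ h1 (by omega)))
      (hw ℓ h1 (by omega)).1
  have htele : ∑ ℓ ∈ Icc 1 L, (u (ℓ + 1) - u ℓ) * w ℓ ≤ u (L + 1) - u 1 := by
    rw [← Ico_add_one_right_eq_Icc]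
    refine sum_Ico_sub_mul_le (by omega) (fun ℓ hℓ => ?_) (fun ℓ hℓ => ?_)
    · obtain ⟨h1, h2⟩ := mem_Ico.1 hℓ
      exact max_le_max_right 0 (sub_le_sub_right (sub_le_sub_left
        (tailSum_succ_le (by omega) (hαβ ℓ h1 (by omega)).2) γ) r)
    · exact (hw ℓ (mem_Ico.1 hℓ).1 (by grind)).2
  have htail : α (L + 1) - tailSum N β (L + 1) ≤
      ∑ ℓ ∈ Icc (L + 1) (N + 1), (α ℓ - β ℓ) * w ℓ :=
    sub_sum_le_sum_sub_mul (mem_Icc.2 ⟨le_rfl, by omega⟩) hwL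
      (fun ℓ hℓ => (hαβ ℓ (by grind) (mem_Icc.1 hℓ).2).1)
      (fun ℓ hℓ => (hαβ ℓ (by grind) (mem_Icc.1 hℓ).2).2)
      (fun ℓ hℓ => hw ℓ (by grind) (mem_Icc.1 hℓ).2)
  have hlast : max (-c (L + 1)) 0 ≤ α (L + 1) :=
    max_le (by linarith [hdual' (L + 1) (by omega) (by omega), (hρ (L + 1) (by omega) le_rfl).1])
      (hαβ (L + 1) (by omega) (by omega)).1
  have hδL : δ (L + 1) = c (L + 1) - u (L + 1) + max (-c (L + 1)) 0 :=
    (hδ (L + 1) (by omega) le_rfl).trans (max_min_eq_sub_add hr _)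
  have hsum := sum_le_sum hstep
  rw [sum_add_distrib] at hsum
  rw [Jfun, Gfun, ← sum_Icc_consecutive _ (by omega) (by omega : L ≤ N + 1)]
  linarith [le_max_right (c 1 - r) 0]

theorem stmt7_general
    (N L : ℕ) (hLN : L ≤ N)
    (ρ : ℕ → ℝ)
    (hρpos : ∀ ℓ, 1 ≤ ℓ → ℓ ≤ N + 1 → ℓ ≠ L + 1 → 0 < ρ ℓ)
    (hρ0 : ρ (L + 1) = 0)
    (α β : ℕ → ℝ) (γ : ℝ) (hD : memD N ρ α β γ)
    (δ : ℕ → ℝ)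
    (hδdef : ∀ ℓ, 1 ≤ ℓ → ℓ ≤ L + 1 →
      δ ℓ = max (min (γ - ∑ ℓ' ∈ Finset.Icc ℓ (N + 1), β ℓ') (rbar L ρ)) 0) :
    memDelta L ρ δ ∧ ∀ w, memW N L w → Jfun L ρ w δ ≤ Gfun N w α β γ := by
  have hρ : ∀ ℓ, 1 ≤ ℓ → ℓ ≤ L + 1 → 0 ≤ ρ ℓ ∧ ρ ℓ ≤ rbar L ρ := by
    intro ℓ h1 h2
    refine ⟨?_, le_sup' ρ (mem_Icc.2 ⟨h1, h2⟩)⟩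
    rcases eq_or_ne ℓ (L + 1) with rfl | h
    · exact hρ0.ge
    · exact (hρpos ℓ h1 (by omega) h).le
  have hr : 0 ≤ rbar L ρ :=
    (hρ (L + 1) (by omega) le_rfl).1.trans (hρ (L + 1) (by omega) le_rfl).2
  have hc : ∀ ℓ, 1 ≤ ℓ → ℓ ≤ L → γ - tailSum N β ℓ ≤ γ - tailSum N β (ℓ + 1) :=
    fun ℓ h1 h2 => sub_le_sub_left (tailSum_succ_le (by omega) (hD.1 ℓ h1 (by omega)).2) γ
  exact ⟨memDelta_of_eq_max_min hr hc hδdef, fun w hw => Jfun_le_Gfun hLN hr hD hρ hδdef hw⟩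

theorem stmt7
    (N L : ℕ) (hL1 : 1 ≤ L) (hLN : L ≤ N)
    (ρ : ℕ → ℝ)
    (hρpos : ∀ ℓ, 1 ≤ ℓ → ℓ ≤ N + 1 → ℓ ≠ L + 1 → 0 < ρ ℓ)
    (hρ0 : ρ (L + 1) = 0)
    (α β : ℕ → ℝ) (γ : ℝ) (hD : memD N ρ α β γ)
    (δ : ℕ → ℝ)
    (hδdef : ∀ ℓ, 1 ≤ ℓ → ℓ ≤ L + 1 →
      δ ℓ = max (min (γ - ∑ ℓ' ∈ Finset.Icc ℓ (N + 1), β ℓ') (rbar L ρ)) 0) :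
    memDelta L ρ δ ∧ ∀ w, memW N L w → Jfun L ρ w δ ≤ Gfun N w α β γ :=
  stmt7_general N L hLN ρ hρpos hρ0 α β γ hD δ hδdef
end

section
/- If δ ∈ Δ satisfies all four of properties (P1), (P2), (P3), (P4), then δ is a Pareto cut. -/
open Finset

/-- `T(δ) = max {ℓ ∈ {1,…,L+1} : δ ℓ ≤ ρ ℓ}`. -/
noncomputable def Tof (L : ℕ) (ρ δ : ℕ → ℝ) : ℕ :=
  sSup {ℓ : ℕ | 1 ≤ ℓ ∧ ℓ ≤ L + 1 ∧ δ ℓ ≤ ρ ℓ}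

/-- Property (P1). -/
def P1 (L : ℕ) (ρ δ : ℕ → ℝ) : Prop := 1 < Tof L ρ δ

/-- Property (P2). -/
def P2 (ρ δ : ℕ → ℝ) : Prop := δ 1 ≤ ρ 1

/-- Property (P3). -/
def P3 (L : ℕ) (ρ δ : ℕ → ℝ) : Prop :=
  ∀ ℓ, 2 ≤ ℓ → ℓ ≤ L → δ ℓ < ρ ℓ → δ ℓ = δ (ℓ + 1)

/-- Property (P4). -/
def P4 (L : ℕ) (ρ δ : ℕ → ℝ) : Prop :=
  ∀ ℓ, Tof L ρ δ ≤ ℓ → ℓ ≤ L + 1 → δ ℓ = δ (Tof L ρ δ)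

/-!
Suppose `δ' ∈ Δ` satisfies `J(w, δ') ≤ J(w, δ)` for all `w ∈ W`. Testing this on the 0/1 weights
supported on `S ∪ {L+1}`, `S ⊆ {1, …, L}`, gives linear inequalities between `δ` and `δ'`. For an
interval `S = [j, m)` starting at the last `j < m` with `δ j ≤ ρ j` (it exists by (P2)), the term
`max 0 (ρ ℓ - δ ℓ)` vanishes on `S` except at `j`, and the sum telescopes to
`δ m - δ' m ≤ δ (L+1) - δ' (L+1)`. For `S = [j, L]` with `j < T(δ)` (possible by (P1)) the terms at
`j` and `T` survive, which gives `δ T ≤ δ' T` (if `T = L+1`, from `δ T ≤ ρ (L+1) = 0 ≤ δ' T`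
instead), hence `δ' (L+1) = δ (L+1)` by (P4). A downward induction with singletons `S = {ℓ}` and
(P3) then gives `δ' = δ` on `{2, …, L+1}`, and `S = {1}` shows that the coefficients of `w 1` agree
as well. So `J(·, δ') = J(·, δ)`, and `δ'` cannot dominate `δ`.
-/

lemma exists_greatest_of_lt {P : ℕ → Prop} {a m : ℕ} (ha : P a) (ham : a < m) :
    ∃ j, a ≤ j ∧ j < m ∧ P j ∧ ∀ ℓ, j < ℓ → ℓ < m → ¬ P ℓ := by
  classical
  refine ⟨Nat.findGreatest P (m - 1), Nat.le_findGreatest (by omega) ha, ?_,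
    Nat.findGreatest_spec (by omega) ha, fun ℓ hjℓ hℓm => Nat.findGreatest_is_greatest hjℓ (by omega)⟩
  have := Nat.findGreatest_le (P := P) (m - 1)
  omega

lemma max_zero_sub_sub_sub (a b c : ℝ) : max 0 (a - b) - (c - b) = max a b - c := by
  have h := max_sub_sub_right a b b
  rw [sub_self, max_comm] at h
  rw [h]
  ring

lemma memDelta.monotoneOn {L : ℕ} {ρ x : ℕ → ℝ} (hx : memDelta L ρ x) :
    MonotoneOn x (Set.Icc 1 (L + 1)) :=
  monotoneOn_of_le_add_one Set.ordConnected_Icc fun a _ ha ha' =>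
    hx.2.1 a ha.1 (by simp only [Set.mem_Icc] at ha'; omega)

section Tof

variable {L : ℕ} {ρ δ : ℕ → ℝ}

lemma bddAbove_Tof_set : BddAbove {ℓ : ℕ | 1 ≤ ℓ ∧ ℓ ≤ L + 1 ∧ δ ℓ ≤ ρ ℓ} :=
  ⟨L + 1, fun _ h => h.2.1⟩

lemma Tof_mem (h : 0 < Tof L ρ δ) :
    1 ≤ Tof L ρ δ ∧ Tof L ρ δ ≤ L + 1 ∧ δ (Tof L ρ δ) ≤ ρ (Tof L ρ δ) := by
  refine Nat.sSup_mem ?_ bddAbove_Tof_set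
  by_contra hne
  rw [Set.not_nonempty_iff_eq_empty] at hne
  simp [Tof, hne] at h

lemma lt_of_Tof_lt {ℓ : ℕ} (hℓ : Tof L ρ δ < ℓ) (hℓL : ℓ ≤ L + 1) : ρ ℓ < δ ℓ := by
  by_contra! h
  exact hℓ.not_ge (le_csSup bddAbove_Tof_set ⟨by omega, hℓL, h⟩)

end Tof

def testWeight (L : ℕ) (S : Finset ℕ) (ℓ : ℕ) : ℝ :=
  if ℓ ∈ S ∨ ℓ = L + 1 then 1 else 0

lemma testWeight_memW (N L : ℕ) (S : Finset ℕ) : memW N L (testWeight L S) :=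
  ⟨fun ℓ _ _ => by unfold testWeight; split_ifs <;> norm_num, by simp [testWeight]⟩

lemma Jfun_testWeight {L : ℕ} {S : Finset ℕ} (hS : S ⊆ Icc 1 L) (ρ x : ℕ → ℝ) :
    Jfun L ρ (testWeight L S) x
      = x (L + 1) + ∑ ℓ ∈ S, (max 0 (ρ ℓ - x ℓ) - (x (ℓ + 1) - x ℓ)) := by
  unfold Jfun
  congr 1
  rw [← sum_subset hS fun ℓ hℓ hℓS => ?_]
  · exact sum_congr rfl fun ℓ hℓ => by simp [testWeight, hℓ]
  · have : ℓ ≠ L + 1 := by simp only [mem_Icc] at hℓ; omega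
    simp [testWeight, hℓS, this]

def WeaklyDominates (N L : ℕ) (ρ δ' δ : ℕ → ℝ) : Prop :=
  ∀ w, memW N L w → Jfun L ρ w δ' ≤ Jfun L ρ w δ

namespace WeaklyDominates

variable {N L : ℕ} {ρ δ δ' : ℕ → ℝ}

lemma test_le (hdom : WeaklyDominates N L ρ δ' δ) {S : Finset ℕ} (hS : S ⊆ Icc 1 L) :
    δ' (L + 1) + ∑ ℓ ∈ S, (max 0 (ρ ℓ - δ' ℓ) - (δ' (ℓ + 1) - δ' ℓ))
      ≤ δ (L + 1) + ∑ ℓ ∈ S, (max 0 (ρ ℓ - δ ℓ) - (δ (ℓ + 1) - δ ℓ)) := by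
  simpa only [Jfun_testWeight hS] using hdom _ (testWeight_memW N L S)

lemma singleton_le (hdom : WeaklyDominates N L ρ δ' δ) {ℓ : ℕ} (h1ℓ : 1 ≤ ℓ) (hℓL : ℓ ≤ L) :
    δ' (L + 1) + (max (ρ ℓ) (δ' ℓ) - δ' (ℓ + 1))
      ≤ δ (L + 1) + (max (ρ ℓ) (δ ℓ) - δ (ℓ + 1)) := by
  simpa only [sum_singleton, max_zero_sub_sub_sub] using
    hdom.test_le (S := {ℓ}) (by simpa using ⟨h1ℓ, hℓL⟩)

lemma Ico_le (hdom : WeaklyDominates N L ρ δ' δ) {j m : ℕ} (hj : 1 ≤ j) (hjm : j ≤ m)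
    (hm : m ≤ L + 1) {A : Finset ℕ} (hA : A ⊆ Ico j m) (hle : ∀ ℓ ∈ A, δ ℓ ≤ ρ ℓ)
    (hge : ∀ ℓ ∈ Ico j m, ℓ ∉ A → ρ ℓ ≤ δ ℓ) :
    δ' (L + 1) - δ' m + δ' j + ∑ ℓ ∈ A, (ρ ℓ - δ' ℓ)
      ≤ δ (L + 1) - δ m + δ j + ∑ ℓ ∈ A, (ρ ℓ - δ ℓ) := by
  have h := hdom.test_le (S := Ico j m) fun ℓ hℓ => by simp only [mem_Ico, mem_Icc] at hℓ ⊢; omega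
  rw [sum_sub_distrib, sum_Ico_sub _ hjm, sum_sub_distrib, sum_Ico_sub _ hjm] at h
  have hδ' : ∑ ℓ ∈ A, (ρ ℓ - δ' ℓ) ≤ ∑ ℓ ∈ Ico j m, max 0 (ρ ℓ - δ' ℓ) :=
    (sum_le_sum fun ℓ _ => le_max_right _ _).trans
      (sum_le_sum_of_subset_of_nonneg hA fun _ _ _ => le_max_left _ _)
  have hδ : ∑ ℓ ∈ Ico j m, max 0 (ρ ℓ - δ ℓ) = ∑ ℓ ∈ A, (ρ ℓ - δ ℓ) := by
    rw [← sum_subset hA fun ℓ hℓ hℓA => max_eq_left (sub_nonpos.2 (hge ℓ hℓ hℓA))]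
    exact sum_congr rfl fun ℓ hℓ => max_eq_right (sub_nonneg.2 (hle ℓ hℓ))
  linarith

lemma sub_le_sub_top (hdom : WeaklyDominates N L ρ δ' δ) (h2 : P2 ρ δ) {m : ℕ} (hm : 2 ≤ m)
    (hmL : m ≤ L + 1) : δ m - δ' m ≤ δ (L + 1) - δ' (L + 1) := by
  obtain ⟨j, hj1, hjm, hjρ, hgt⟩ :=
    exists_greatest_of_lt (P := fun ℓ => δ ℓ ≤ ρ ℓ) h2 (by omega : 1 < m)
  have h := hdom.Ico_le (A := {j}) hj1 hjm.le hmL (by simpa using hjm) (by simpa using hjρ)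
    fun ℓ hℓ hℓj => by
      simp only [mem_Ico, mem_singleton] at hℓ hℓj
      exact (not_le.1 (hgt ℓ (by omega) hℓ.2)).le
  simp only [sum_singleton] at h
  linarith

lemma apply_Tof_le (hdom : WeaklyDominates N L ρ δ' δ) (hδ' : memDelta L ρ δ')
    (hρ0 : ρ (L + 1) = 0) (h1 : P1 L ρ δ) (h2 : P2 ρ δ) :
    δ (Tof L ρ δ) ≤ δ' (Tof L ρ δ) := by
  have h1' : 1 < Tof L ρ δ := h1
  obtain ⟨hT1, hTL, hTρ⟩ := Tof_mem (by omega : 0 < Tof L ρ δ)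
  rcases hTL.eq_or_lt with hT | hT
  · rw [hT] at hTρ ⊢
    rw [hρ0] at hTρ
    have : δ' 1 ≤ δ' (L + 1) := hδ'.monotoneOn (by simp) (by simp) (by omega)
    linarith [hδ'.1]
  · obtain ⟨j, hj1, hjT, hjρ, hgt⟩ := exists_greatest_of_lt (P := fun ℓ => δ ℓ ≤ ρ ℓ) h2 h1'
    have h := hdom.Ico_le (A := {j, Tof L ρ δ}) hj1 (by omega) le_rfl
      (by simp only [insert_subset_iff, singleton_subset_iff, mem_Ico]; omega)
      (by simpa using ⟨hjρ, hTρ⟩)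
      fun ℓ hℓ hℓA => by
        simp only [mem_Ico, mem_insert, mem_singleton, not_or] at hℓ hℓA
        rcases lt_or_gt_of_ne hℓA.2 with hℓT | hℓT
        · exact (not_le.1 (hgt ℓ (by omega) hℓT)).le
        · exact (lt_of_Tof_lt hℓT (by omega)).le
    rw [sum_pair hjT.ne, sum_pair hjT.ne] at h
    linarith

lemma top_eq (hdom : WeaklyDominates N L ρ δ' δ) (hδ' : memDelta L ρ δ')
    (hρ0 : ρ (L + 1) = 0) (h1 : P1 L ρ δ) (h2 : P2 ρ δ) (h4 : P4 L ρ δ) :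
    δ' (L + 1) = δ (L + 1) := by
  have h1' : 1 < Tof L ρ δ := h1
  obtain ⟨hT1, hTL, -⟩ := Tof_mem (by omega : 0 < Tof L ρ δ)
  have hle : δ' (L + 1) ≤ δ (L + 1) := by simpa using hdom.test_le (S := ∅) (empty_subset _)
  have hT : δ (Tof L ρ δ) ≤ δ' (Tof L ρ δ) := hdom.apply_Tof_le hδ' hρ0 h1 h2
  have hflat : δ (L + 1) = δ (Tof L ρ δ) := h4 (L + 1) hTL le_rfl
  have hmono : δ' (Tof L ρ δ) ≤ δ' (L + 1) :=
    hδ'.monotoneOn ⟨hT1, hTL⟩ (by simp) hTL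
  linarith

lemma eq_of_two_le (hdom : WeaklyDominates N L ρ δ' δ) (hδ' : memDelta L ρ δ')
    (hρ0 : ρ (L + 1) = 0) (h1 : P1 L ρ δ) (h2 : P2 ρ δ) (h3 : P3 L ρ δ) (h4 : P4 L ρ δ)
    {ℓ : ℕ} (hℓ : 2 ≤ ℓ) (hℓL : ℓ ≤ L + 1) : δ' ℓ = δ ℓ := by
  have htop := hdom.top_eq hδ' hρ0 h1 h2 h4
  refine Nat.decreasingInduction' (fun k hkL hℓk hnext => ?_) hℓL htop
  have hlow := hdom.sub_le_sub_top h2 (m := k) (by omega) hkL.le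
  by_cases hk : δ k < ρ k
  · have hδk : δ k = δ (k + 1) := h3 k (by omega) (by omega) hk
    have hδ'k : δ' k ≤ δ' (k + 1) := hδ'.2.1 k (by omega) (by omega)
    linarith
  · have h := hdom.singleton_le (ℓ := k) (by omega) (by omega)
    rw [max_eq_right (not_lt.1 hk)] at h
    linarith [le_max_right (ρ k) (δ' k)]

lemma Jfun_eq (hdom : WeaklyDominates N L ρ δ' δ) (hδ' : memDelta L ρ δ')
    (hρ0 : ρ (L + 1) = 0) (h1 : P1 L ρ δ) (h2 : P2 ρ δ) (h3 : P3 L ρ δ) (h4 : P4 L ρ δ)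
    (w : ℕ → ℝ) : Jfun L ρ w δ' = Jfun L ρ w δ := by
  have htop := hdom.top_eq hδ' hρ0 h1 h2 h4
  have heq : ∀ ℓ, 2 ≤ ℓ → ℓ ≤ L + 1 → δ' ℓ = δ ℓ := fun _ => hdom.eq_of_two_le hδ' hρ0 h1 h2 h3 h4
  have hcoef : ∀ ℓ ∈ Icc 1 L, max 0 (ρ ℓ - δ' ℓ) - (δ' (ℓ + 1) - δ' ℓ)
      = max 0 (ρ ℓ - δ ℓ) - (δ (ℓ + 1) - δ ℓ) := by
    intro ℓ hℓ
    rw [mem_Icc] at hℓ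
    rcases hℓ.1.eq_or_lt with rfl | hℓ1
    · have h := hdom.singleton_le le_rfl hℓ.2
      rw [htop, max_eq_left h2, heq (1 + 1) le_rfl (by omega)] at h
      rw [max_zero_sub_sub_sub, max_zero_sub_sub_sub, max_eq_left h2, heq (1 + 1) le_rfl (by omega)]
      linarith [le_max_left (ρ 1) (δ' 1)]
    · rw [heq ℓ hℓ1 (by omega), heq (ℓ + 1) (by omega) (by omega)]
  unfold Jfun
  rw [htop, sum_congr rfl fun ℓ hℓ => by rw [hcoef ℓ hℓ]]

end WeaklyDominates

theorem stmt10_general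
    (N L : ℕ)
    (ρ : ℕ → ℝ)
    (hρ0 : ρ (L + 1) = 0)
    (δ : ℕ → ℝ)
    (h1 : P1 L ρ δ) (h2 : P2 ρ δ) (h3 : P3 L ρ δ) (h4 : P4 L ρ δ) :
    paretoDelta N L ρ δ := by
  rintro ⟨δ', hδ', hdom, w, -, hlt⟩
  exact hlt.ne (WeaklyDominates.Jfun_eq hdom hδ' hρ0 h1 h2 h3 h4 w)

theorem stmt10
    (N L : ℕ) (hL1 : 1 ≤ L) (hLN : L ≤ N)
    (ρ : ℕ → ℝ)
    (hρpos : ∀ ℓ, 1 ≤ ℓ → ℓ ≤ N + 1 → ℓ ≠ L + 1 → 0 < ρ ℓ)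
    (hρ0 : ρ (L + 1) = 0)
    (δ : ℕ → ℝ) (hδ : memDelta L ρ δ)
    (h1 : P1 L ρ δ) (h2 : P2 ρ δ) (h3 : P3 L ρ δ) (h4 : P4 L ρ δ) :
    paretoDelta N L ρ δ :=
  stmt10_general N L ρ hρ0 δ h1 h2 h3 h4
end
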